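/- If E is strictly convex and μ is a Borel probability measure concentrated on an affine line L (μ(L) = 1), then the set of geometric medians of μ is a nonempty closed line segment contained in L. -/

import Mathlib

/-!
Write `φ c = ∫ (‖c - x‖ - ‖x‖) dμ`; it is finite, convex, 1-Lipschitz and tends to `+∞` at
infinity. Let `L = u + ℝ v` and let `g` be a norming functional of `v` (`‖g‖ = 1`, `g v = ‖v‖`).
Moving `c` to the point of `L` with the same `g`-coordinate does not increase its distance to any
point of `L`, hence does not increase `φ` since `μ` lives on `L`; by strict convexity the distance
to a point of `L` is preserved only when `c ∈ L`. So every geometric median lies on `L`, and the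
medians are the image of the minimizers of the convex coercive function `t ↦ φ (u + t • v)`,
which form a compact interval.
-/

open MeasureTheory Filter Set Bornology

lemma exists_lt_measure_closedBall {X : Type*} [PseudoMetricSpace X] [MeasurableSpace X]
    (μ : Measure X) {r : ENNReal} (hr : r < μ univ) (x : X) :
    ∃ n : ℕ, r < μ (Metric.closedBall x n) := by
  have hlim := tendsto_measure_iUnion_atTop (μ := μ)
    (fun m n (h : m ≤ n) => Metric.closedBall_subset_closedBall (x := x) (Nat.cast_le.mpr h))
  rw [Metric.iUnion_closedBall_nat] at hlim
  exact (hlim.eventually (lt_mem_nhds hr)).exists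

section MedianCost

variable {E : Type*} [NormedAddCommGroup E]

lemma abs_norm_sub_sub_norm_sub_le (c c' x : E) : |‖c - x‖ - ‖c' - x‖| ≤ ‖c - c'‖ := by
  simpa using abs_norm_sub_norm_le (c - x) (c' - x)

noncomputable def medianCost [MeasurableSpace E] (μ : Measure E) (c : E) : ℝ :=
  ∫ x, (‖c - x‖ - ‖x‖) ∂μ

variable [MeasurableSpace E] [OpensMeasurableSpace E] (μ : Measure E)

lemma integrable_norm_sub_sub_norm [IsFiniteMeasure μ] (c : E) :
    Integrable (fun x => ‖c - x‖ - ‖x‖) μ := by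
  refine (integrable_const ‖c‖).mono' (by fun_prop) (ae_of_all _ fun x => ?_)
  simpa using abs_norm_sub_sub_norm_sub_le c 0 x

lemma medianCost_sub_medianCost [IsFiniteMeasure μ] (c c' : E) :
    medianCost μ c - medianCost μ c' = ∫ x, (‖c - x‖ - ‖c' - x‖) ∂μ := by
  rw [medianCost, medianCost, ← integral_sub (integrable_norm_sub_sub_norm μ c)
    (integrable_norm_sub_sub_norm μ c')]
  congr 1 with x
  ring

lemma lipschitzWith_medianCost [IsProbabilityMeasure μ] : LipschitzWith 1 (medianCost μ) := by
  refine LipschitzWith.of_dist_le_mul fun c c' => ?_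
  rw [Real.dist_eq, medianCost_sub_medianCost, NNReal.coe_one, one_mul, dist_eq_norm]
  simpa using norm_integral_le_of_norm_le_const (μ := μ)
    (ae_of_all _ fun x => (Real.norm_eq_abs _).trans_le (abs_norm_sub_sub_norm_sub_le c c' x))

lemma convexOn_medianCost [NormedSpace ℝ E] [IsFiniteMeasure μ] :
    ConvexOn ℝ univ (medianCost μ) := by
  refine ⟨convex_univ, fun a _ b _ p q hp hq hpq => ?_⟩
  have hint := fun c => integrable_norm_sub_sub_norm μ c
  have hpoint : ∀ x : E, ‖(p • a + q • b) - x‖ - ‖x‖ ≤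
      p * (‖a - x‖ - ‖x‖) + q * (‖b - x‖ - ‖x‖) := fun x => by
    have hsplit : (p • a + q • b) - x = p • (a - x) + q • (b - x) := by
      linear_combination (norm := module) hpq • x
    calc ‖(p • a + q • b) - x‖ - ‖x‖ ≤ p * ‖a - x‖ + q * ‖b - x‖ - (p + q) * ‖x‖ := by
          rw [hsplit, hpq, one_mul]
          gcongr
          refine (norm_add_le _ _).trans_eq ?_
          rw [norm_smul_of_nonneg hp, norm_smul_of_nonneg hq]
      _ = p * (‖a - x‖ - ‖x‖) + q * (‖b - x‖ - ‖x‖) := by ring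
  calc medianCost μ (p • a + q • b)
      ≤ ∫ x, (p * (‖a - x‖ - ‖x‖) + q * (‖b - x‖ - ‖x‖)) ∂μ :=
        integral_mono (hint _) (((hint a).const_mul p).add ((hint b).const_mul q)) hpoint
    _ = p • medianCost μ a + q • medianCost μ b := by
        rw [integral_add ((hint a).const_mul p) ((hint b).const_mul q), integral_const_mul,
          integral_const_mul]
        rfl

lemma medianCost_le_of_ae_norm_sub_le [IsFiniteMeasure μ] {c c' : E}
    (h : ∀ᵐ x ∂μ, ‖c - x‖ ≤ ‖c' - x‖) : medianCost μ c ≤ medianCost μ c' :=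
  integral_mono_ae (integrable_norm_sub_sub_norm μ c) (integrable_norm_sub_sub_norm μ c')
    (h.mono fun _ hx => sub_le_sub_right hx _)

lemma ae_norm_sub_eq_of_medianCost_le [IsFiniteMeasure μ] {c c' : E}
    (h : ∀ᵐ x ∂μ, ‖c - x‖ ≤ ‖c' - x‖) (h' : medianCost μ c' ≤ medianCost μ c) :
    ∀ᵐ x ∂μ, ‖c - x‖ = ‖c' - x‖ := by
  have hnonneg : 0 ≤ᵐ[μ] fun x => ‖c' - x‖ - ‖c - x‖ := h.mono fun _ hx => sub_nonneg.mpr hx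
  have hzero : ∫ x, (‖c' - x‖ - ‖c - x‖) ∂μ = 0 := by
    rw [← medianCost_sub_medianCost]
    linarith [medianCost_le_of_ae_norm_sub_le μ h]
  have hint : Integrable (fun x => ‖c' - x‖ - ‖c - x‖) μ := by
    refine ((integrable_norm_sub_sub_norm μ c').sub (integrable_norm_sub_sub_norm μ c)).congr
      (ae_of_all _ fun x => ?_)
    simp only [Pi.sub_apply, sub_sub_sub_cancel_right]
  filter_upwards [(integral_eq_zero_iff_of_nonneg_ae hnonneg hint).mp hzero] with x hx
  exact (sub_eq_zero.mp hx).symm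

lemma exists_medianCost_ge [IsProbabilityMeasure μ] :
    ∃ R : ℝ, ∀ c, ‖c‖ / 2 - 2 * R ≤ medianCost μ c := by
  -- A ball of radius `R` and mass `m` gives `medianCost μ c ≥ (2 * m - 1) * ‖c‖ - 2 * R * m`.
  obtain ⟨n, hn⟩ := exists_lt_measure_closedBall μ (r := ENNReal.ofReal (3 / 4))
    (by rw [measure_univ, ENNReal.ofReal_lt_one]; norm_num) 0
  set R : ℝ := (n : ℝ)
  set B := Metric.closedBall (0 : E) R
  have hB : MeasurableSet B := Metric.isClosed_closedBall.measurableSet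
  have hmass : 3 / 4 < μ.real B :=
    (ENNReal.ofReal_lt_iff_lt_toReal (by norm_num) (measure_ne_top μ B)).mp hn
  have hR : 0 ≤ R := Nat.cast_nonneg n
  refine ⟨R, fun c => ?_⟩
  have hpoint : ∀ x, B.indicator (fun _ => 2 * ‖c‖ - 2 * R) x - ‖c‖ ≤ ‖c - x‖ - ‖x‖ := by
    intro x
    by_cases hx : x ∈ B
    · have hxR : ‖x‖ ≤ R := by simpa [B] using hx
      rw [indicator_of_mem hx]
      linarith [norm_sub_norm_le c x]
    · rw [indicator_of_notMem hx]
      linarith [norm_sub_norm_le x c, norm_sub_rev x c]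
  have hlower : ∫ x, (B.indicator (fun _ => 2 * ‖c‖ - 2 * R) x - ‖c‖) ∂μ ≤ medianCost μ c :=
    integral_mono (((integrable_const _).indicator hB).sub (integrable_const _))
    (integrable_norm_sub_sub_norm μ c) hpoint
  rw [integral_sub ((integrable_const _).indicator hB) (integrable_const _),
    integral_indicator_const _ hB, integral_const, probReal_univ, one_smul, smul_eq_mul] at hlower
  have hle : μ.real B ≤ 1 := measureReal_le_one
  nlinarith [norm_nonneg c]

lemma tendsto_medianCost_cobounded [IsProbabilityMeasure μ] :
    Tendsto (medianCost μ) (cobounded E) atTop := by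
  obtain ⟨R, hR⟩ := exists_medianCost_ge μ
  exact tendsto_atTop_mono hR (tendsto_atTop_add_const_right _ _
    (tendsto_norm_cobounded_atTop.atTop_div_const (by norm_num)))

end MedianCost

section Line

variable {E : Type*} [NormedAddCommGroup E] [NormedSpace ℝ E]

lemma dist_add_smul_add_smul (u v : E) (s t : ℝ) :
    dist (u + s • v) (u + t • v) = dist s t * ‖v‖ := by
  rw [dist_eq_norm, add_sub_add_left_eq_sub, ← sub_smul, norm_smul, Real.dist_eq, Real.norm_eq_abs]

lemma antilipschitzWith_add_smul (u : E) {v : E} (hv : v ≠ 0) :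
    AntilipschitzWith ‖v‖₊⁻¹ (fun t : ℝ => u + t • v) :=
  AntilipschitzWith.of_le_mul_dist fun s t => by
    rw [dist_add_smul_add_smul, NNReal.coe_inv, coe_nnnorm, mul_comm (dist s t),
      inv_mul_cancel_left₀ (norm_ne_zero_iff.mpr hv)]

lemma lipschitzWith_add_smul (u v : E) : LipschitzWith ‖v‖₊ (fun t : ℝ => u + t • v) :=
  LipschitzWith.of_dist_le_mul fun s t => by rw [dist_add_smul_add_smul, coe_nnnorm, mul_comm]

lemma isClosed_range_add_smul (u : E) {v : E} (hv : v ≠ 0) :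
    IsClosed (range fun t : ℝ => u + t • v) :=
  (antilipschitzWith_add_smul u hv).isClosed_range (lipschitzWith_add_smul u v).uniformContinuous

lemma coe_lineMap_add (u v : E) :
    ⇑(AffineMap.lineMap u (u + v) : ℝ →ᵃ[ℝ] E) = fun t => u + t • v := by
  funext t
  rw [AffineMap.lineMap_apply_module', add_sub_cancel_left, add_comm]

variable {v : E} {g : StrongDual ℝ E}

lemma exists_smul_eq_of_abs_apply_eq_norm [StrictConvexSpace ℝ E] (hv : v ≠ 0) (hg : ‖g‖ ≤ 1)
    (hgv : g v = ‖v‖) {y : E} (hy : |g y| = ‖y‖) : ∃ r : ℝ, r • v = y := by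
  have hnorming : ∀ z, g z = ‖z‖ → ∃ r : ℝ, r • v = z := fun z hz => by
    have hle : ‖z‖ + ‖v‖ ≤ ‖z + v‖ :=
      calc ‖z‖ + ‖v‖ = g (z + v) := by rw [map_add, hz, hgv]
        _ ≤ ‖z + v‖ := (le_abs_self _).trans (by simpa using g.le_of_opNorm_le hg (z + v))
    obtain ⟨r, -, hr⟩ :=
      (sameRay_iff_norm_add.mpr (le_antisymm (norm_add_le _ _) hle)).exists_nonneg_right hv
    exact ⟨r, hr.symm⟩
  rcases abs_cases (g y) with ⟨hpos, -⟩ | ⟨hneg, -⟩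
  · exact hnorming y (hpos ▸ hy)
  · obtain ⟨r, hr⟩ := hnorming (-y) (by rw [map_neg, norm_neg, ← hy, hneg])
    exact ⟨-r, by rw [neg_smul, hr, neg_neg]⟩

lemma norm_add_div_smul_sub_add_smul (hv : v ≠ 0) (hgv : g v = ‖v‖) (u c : E) (s : ℝ) :
    ‖(u + (g (c - u) / ‖v‖) • v) - (u + s • v)‖ = |g (c - (u + s • v))| := by
  rw [← dist_eq_norm, dist_add_smul_add_smul, Real.dist_eq, ← abs_norm v, ← abs_mul, sub_mul,
    abs_norm, div_mul_cancel₀ _ (norm_ne_zero_iff.mpr hv), ← hgv, ← smul_eq_mul, ← map_smul,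
    ← map_sub, sub_sub]

end Line

section ConcentratedOnLine

variable {E : Type*} [NormedAddCommGroup E] [NormedSpace ℝ E] [MeasurableSpace E]
  (μ : Measure E) {u v : E} {g : StrongDual ℝ E}

lemma ae_norm_add_div_smul_sub_le (hv : v ≠ 0) (hg : ‖g‖ ≤ 1) (hgv : g v = ‖v‖)
    (hμL : ∀ᵐ x ∂μ, x ∈ range fun t : ℝ => u + t • v) (c : E) :
    ∀ᵐ x ∂μ, ‖(u + (g (c - u) / ‖v‖) • v) - x‖ ≤ ‖c - x‖ := by
  filter_upwards [hμL] with x ⟨s, hs⟩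
  rw [← hs, norm_add_div_smul_sub_add_smul hv hgv]
  simpa using g.le_of_opNorm_le hg (c - (u + s • v))

lemma mem_range_of_medianCost_le [StrictConvexSpace ℝ E] [OpensMeasurableSpace E]
    [IsFiniteMeasure μ] [NeZero μ] (hv : v ≠ 0) (hg : ‖g‖ ≤ 1)
    (hgv : g v = ‖v‖) (hμL : ∀ᵐ x ∂μ, x ∈ range fun t : ℝ => u + t • v) {c : E}
    (hc : medianCost μ c ≤ medianCost μ (u + (g (c - u) / ‖v‖) • v)) :
    c ∈ range fun t : ℝ => u + t • v := by
  have hproj := ae_norm_add_div_smul_sub_le μ hv hg hgv hμL c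
  obtain ⟨x, hx, s, rfl⟩ := ((ae_norm_sub_eq_of_medianCost_le μ hproj hc).and hμL).exists
  rw [norm_add_div_smul_sub_add_smul hv hgv] at hx
  obtain ⟨r, hr⟩ := exists_smul_eq_of_abs_apply_eq_norm hv hg hgv hx
  exact ⟨s + r, show u + (s + r) • v = c by rw [add_smul, ← add_assoc, hr, add_sub_cancel]⟩

lemma setOf_isMinOn_medianCost_eq_image [StrictConvexSpace ℝ E] [OpensMeasurableSpace E]
    [IsFiniteMeasure μ] [NeZero μ] (hv : v ≠ 0)
    (hμL : ∀ᵐ x ∂μ, x ∈ range fun t : ℝ => u + t • v) :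
    {α | IsMinOn (medianCost μ) univ α} =
      (fun t : ℝ => u + t • v) '' {t | IsMinOn (fun t => medianCost μ (u + t • v)) univ t} := by
  obtain ⟨g, hg, hgv⟩ := exists_dual_vector ℝ v (norm_ne_zero_iff.mpr hv)
  have hproj c :=
    medianCost_le_of_ae_norm_sub_le μ (ae_norm_add_div_smul_sub_le μ hv hg.le hgv hμL c)
  ext α
  simp only [mem_ofPred_eq, mem_image, isMinOn_univ_iff]
  constructor
  · intro hα
    obtain ⟨t, rfl⟩ := mem_range_of_medianCost_le μ hv hg.le hgv hμL (hα _)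
    exact ⟨t, fun s => hα _, rfl⟩
  · rintro ⟨t, ht, rfl⟩ c
    exact (ht _).trans (hproj c)

end ConcentratedOnLine

lemma ConvexOn.exists_setOf_isMinOn_eq_Icc {f : ℝ → ℝ} (hconv : ConvexOn ℝ univ f)
    (hcont : Continuous f) (hlim : Tendsto f (cocompact ℝ) atTop) :
    ∃ a b, a ≤ b ∧ {t | IsMinOn f univ t} = Icc a b := by
  obtain ⟨t₀, ht₀⟩ := hcont.exists_forall_le hlim
  set S := {t | f t ≤ f t₀}
  have hmin : {t | IsMinOn f univ t} = S := by
    ext t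
    simp only [mem_ofPred_eq, isMinOn_univ_iff, S]
    exact ⟨fun h => h t₀, fun h s => h.trans (ht₀ s)⟩
  have hne : S.Nonempty := ⟨t₀, le_refl (f t₀)⟩
  have hcompact : IsCompact S := by
    obtain ⟨K, hK, hKc⟩ := mem_cocompact.mp (hlim.eventually (eventually_gt_atTop (f t₀)))
    refine hK.of_isClosed_subset (isClosed_le hcont continuous_const) fun t ht => ?_
    by_contra htK
    exact (show f t₀ < f t from hKc htK).not_ge ht
  have hconvex : Convex ℝ S := by simpa using hconv.convex_le (f t₀)
  refine ⟨_, _, csInf_le_csSup hne hcompact.bddBelow hcompact.bddAbove, ?_⟩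
  rw [hmin]
  exact eq_Icc_of_connected_compact ⟨hne, hconvex.isPreconnected⟩ hcompact

/-- If `E` is strictly convex and `μ` is concentrated on an affine line `L`, then the set of
geometric medians of `μ` is a nonempty closed line segment contained in `L`. -/
theorem stmt10 {E : Type*} [NormedAddCommGroup E] [NormedSpace ℝ E] [StrictConvexSpace ℝ E]
    [MeasurableSpace E] [BorelSpace E]
    (μ : Measure E) [IsProbabilityMeasure μ]
    (u v : E) (hv : v ≠ 0)
    (hμ : μ (Set.range fun t : ℝ => u + t • v) = 1) :
    ∃ a b : E, a ∈ Set.range (fun t : ℝ => u + t • v) ∧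
      b ∈ Set.range (fun t : ℝ => u + t • v) ∧
      {α : E | IsMinOn (fun c : E => ∫ x, (‖c - x‖ - ‖x‖) ∂μ) Set.univ α} =
        segment ℝ a b := by
  have hμL : ∀ᵐ x ∂μ, x ∈ range fun t : ℝ => u + t • v :=
    (ae_mem_iff_measure_eq (isClosed_range_add_smul u hv).measurableSet.nullMeasurableSet).mpr
      (by rw [hμ, measure_univ])
  have hconv : ConvexOn ℝ univ fun t : ℝ => medianCost μ (u + t • v) := by
    have h := (convexOn_medianCost μ).comp_affineMap (AffineMap.lineMap u (u + v))
    rwa [coe_lineMap_add, preimage_univ] at h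
  have hcont : Continuous fun t : ℝ => medianCost μ (u + t • v) :=
    (lipschitzWith_medianCost μ).continuous.comp (by fun_prop)
  have hlim : Tendsto (fun t : ℝ => medianCost μ (u + t • v)) (cocompact ℝ) atTop := by
    rw [← Metric.cobounded_eq_cocompact]
    exact (tendsto_medianCost_cobounded μ).comp (antilipschitzWith_add_smul u hv).tendsto_cobounded
  obtain ⟨a, b, hab, hmin⟩ := hconv.exists_setOf_isMinOn_eq_Icc hcont hlim
  refine ⟨u + a • v, u + b • v, ⟨a, rfl⟩, ⟨b, rfl⟩, ?_⟩
  change {α | IsMinOn (medianCost μ) univ α} = _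
  rw [setOf_isMinOn_medianCost_eq_image μ hv hμL, hmin, ← segment_eq_Icc hab,
    ← coe_lineMap_add, image_segment, coe_lineMap_add]
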